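/- Graph-theoretic core of Theorem 1 (a honeycomb dynamical code cannot have a 1D-decodable Z-detector graph): Let V be a finite vertex set and m : Sym2 V → ℕ a loopless multigraph multiplicity function with m(e) ≤ 2 for every unordered pair e (at most two parallel edges between any two vertices, no loops). Let n, T, t_i, t_f be natural numbers with n ≥ 1, T ≥ t_i + t_f + 1 and T > 3·t_f + t_i + 3. If 2·(∑_e m(e)) ≥ n·(T − 1 − t_i − t_f) and 6·|V| ≤ n·(T − t_i), then there exists a vertex v ∈ V having at least 3 distinct neighbours, i.e. at least 3 vertices w ≠ v with m({v,w}) > 0 (so the multigraph is not 1D-decodable). -/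

import Mathlib

open Finset

lemma honeycomb_handshake {V : Type*} [Fintype V] [DecidableEq V]
    (m : Sym2 V → ℕ) (hloopless : ∀ v : V, m s(v, v) = 0) :
    ∑ p : V × V, m (Sym2.mk p.1 p.2) = 2 * ∑ e : Sym2 V, m e := by
  rw [← Finset.sum_fiberwise_of_maps_to (g := fun p : V × V => Sym2.mk p.1 p.2)
      (fun p _ => Finset.mem_univ _) (fun p => m (Sym2.mk p.1 p.2)), Finset.mul_sum]
  refine Finset.sum_congr rfl fun e _ => ?_
  induction e using Sym2.ind with
  | _ x y =>
    rcases eq_or_ne x y with rfl | hxy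
    · simp only [hloopless x, mul_zero]
      refine Finset.sum_eq_zero fun p hp => ?_
      simp only [Finset.mem_filter] at hp
      rw [hp.2, hloopless]
    · have hfib : (Finset.univ.filter (fun p : V × V => Sym2.mk p.1 p.2 = s(x, y)))
          = {(x, y), (y, x)} := by
        ext ⟨a, b⟩
        simp [Sym2.eq_iff, Prod.ext_iff, or_comm]
      rw [hfib, Finset.sum_insert (by simp [Prod.ext_iff, hxy]), Finset.sum_singleton,
        Sym2.eq_swap, two_mul]

/-- Graph-theoretic core of Theorem 1: a loopless multigraph with at most two
parallel edges between any pair of vertices, with sufficiently many edges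
relative to vertices (as in the Z-detector graph of a honeycomb dynamical code
of duration `T`, offsets `ti`, `tf`, on `n` qubits), has a vertex with at
least 3 distinct neighbours; hence it is not 1D-decodable. -/
theorem honeycomb_ZDG_not_1D_decodable
    {V : Type*} [Fintype V] [DecidableEq V]
    (m : Sym2 V → ℕ)
    (hloopless : ∀ v : V, m s(v, v) = 0)
    (hmult : ∀ e : Sym2 V, m e ≤ 2)
    (n T ti tf : ℕ)
    (hn : 1 ≤ n)
    (hT1 : ti + tf + 1 ≤ T)
    (hT2 : 3 * tf + ti + 3 < T)
    (hedges : n * (T - 1 - ti - tf) ≤ 2 * ∑ e : Sym2 V, m e)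
    (hverts : 6 * Fintype.card V ≤ n * (T - ti)) :
    ∃ v : V, 3 ≤ (Finset.univ.filter (fun w : V => w ≠ v ∧ 0 < m s(v, w))).card := by
  by_contra hcon
  push_neg at hcon
  -- each vertex has total incident multiplicity at most 4
  have hdeg : ∀ v : V, ∑ w : V, m s(v, w) ≤ 4 := by
    intro v
    have hsub : ∑ w : V, m s(v, w)
        = ∑ w ∈ Finset.univ.filter (fun w : V => w ≠ v ∧ 0 < m s(v, w)), m s(v, w) := by
      refine (Finset.sum_filter_of_ne fun w _ hw => ?_).symm
      constructor
      · rintro rfl; exact hw (hloopless _)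
      · exact Nat.pos_of_ne_zero hw
    rw [hsub]
    calc ∑ w ∈ Finset.univ.filter (fun w : V => w ≠ v ∧ 0 < m s(v, w)), m s(v, w)
        ≤ ∑ _w ∈ Finset.univ.filter (fun w : V => w ≠ v ∧ 0 < m s(v, w)), 2 :=
          Finset.sum_le_sum fun w _ => hmult _
      _ = 2 * (Finset.univ.filter (fun w : V => w ≠ v ∧ 0 < m s(v, w))).card := by
          rw [Finset.sum_const, smul_eq_mul, mul_comm]
      _ ≤ 2 * 2 := by
          have := hcon v
          omega
      _ = 4 := rfl
  have hsum : 2 * ∑ e : Sym2 V, m e ≤ 4 * Fintype.card V := by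
    rw [← honeycomb_handshake m hloopless, ← Finset.univ_product_univ, Finset.sum_product]
    calc ∑ v : V, ∑ w : V, m s(v, w) ≤ ∑ _v : V, 4 := Finset.sum_le_sum fun v _ => hdeg v
      _ = 4 * Fintype.card V := by rw [Finset.sum_const, smul_eq_mul, mul_comm, Finset.card_univ]
  -- combine the inequalities
  have key : n * (3 * (T - 1 - ti - tf)) ≤ n * (2 * (T - ti)) := by
    have h1 : 3 * (n * (T - 1 - ti - tf)) ≤ 12 * Fintype.card V := by
      calc 3 * (n * (T - 1 - ti - tf)) ≤ 3 * (2 * ∑ e : Sym2 V, m e) := by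
            exact Nat.mul_le_mul_left 3 hedges
        _ ≤ 3 * (4 * Fintype.card V) := Nat.mul_le_mul_left 3 hsum
        _ = 12 * Fintype.card V := by ring
    have h2 : 12 * Fintype.card V ≤ 2 * (n * (T - ti)) := by
      calc 12 * Fintype.card V = 2 * (6 * Fintype.card V) := by ring
        _ ≤ 2 * (n * (T - ti)) := Nat.mul_le_mul_left 2 hverts
    calc n * (3 * (T - 1 - ti - tf)) = 3 * (n * (T - 1 - ti - tf)) := by ring
      _ ≤ 2 * (n * (T - ti)) := le_trans h1 h2
      _ = n * (2 * (T - ti)) := by ring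
  have hfin : 3 * (T - 1 - ti - tf) ≤ 2 * (T - ti) :=
    Nat.le_of_mul_le_mul_left key hn
  omega
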